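/- There exists a universal constant C > 0 such that for every 0 < μ ≤ L, every f ∈ S_{μ,L} with minimizer x⋆ and minimum f⋆, and every starting point x₀ ≠ x⋆, the solution X of the ODE Ẍ + (3/t)Ẋ + ∇f(X) = 0 with X(0) = x₀, Ẋ(0) = 0 satisfies f(X(T)) − f⋆ ≤ (1 − Cμ/L)(f(x₀) − f⋆), where T = T(x₀; f) is the speed restarting time. -/

import Mathlib

/-!
For small times the trajectory is driven by the initial gradient: the identity
`t³ Ẋ(t) = -∫₀ᵗ u³ ∇f(X u) du` and the Lipschitz bound give `X(t) ≈ x₀` and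
`Ẋ(t) ≈ -(t/4) ∇f(x₀)` with relative error `O(L t²)`. Hence for `t ≤ t₀ := 1/(3√L)` the speed
`‖Ẋ‖²` strictly increases, so `T ≥ t₀`, and `⟪∇f(X t), Ẋ t⟫ ≤ -(t/5) ‖∇f(x₀)‖²`, which integrates
to `f(X t₀) ≤ f(x₀) - ‖∇f(x₀)‖² / (90 L)`. On `(0, T)` the speed increases, so
`d/dt f(X) = -(3/t)‖Ẋ‖² - ½ d/dt ‖Ẋ‖² < 0` and `f(X T) ≤ f(X t₀)`. The Polyak–Łojasiewicz
inequality `‖∇f(x₀)‖² ≥ 2μ (f(x₀) - f⋆)` then gives the claim with `C = 1/45`.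
`T` is finite because the energy `f(X) + ½‖Ẋ‖²` decreases at rate `(3/t)‖Ẋ‖²`: if the speed
increased forever, the energy would tend to `-∞`.
-/

open Set Filter Topology

noncomputable section

abbrev E (n : ℕ) := EuclideanSpace ℝ (Fin n)

def MemFL (n : ℕ) (L : ℝ) (f : E n → ℝ) : Prop :=
  ConvexOn ℝ Set.univ f ∧ ContDiff ℝ 1 f ∧
    ∀ x y, ‖gradient f x - gradient f y‖ ≤ L * ‖x - y‖

/-- The class `S_{μ,L}`: members of `F_L` such that `f(x) - μ‖x‖²/2` is convex. -/
def MemS (n : ℕ) (μ L : ℝ) (f : E n → ℝ) : Prop :=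
  MemFL n L f ∧ ConvexOn ℝ Set.univ (fun x => f x - μ / 2 * ‖x‖ ^ 2)

def NesterovSol (n : ℕ) (f : E n → ℝ) (x0 : E n) (X : ℝ → E n) : Prop :=
  X 0 = x0 ∧
  ContDiffOn ℝ 1 X (Set.Ici 0) ∧
  ContDiffOn ℝ 2 X (Set.Ioi 0) ∧
  derivWithin X (Set.Ici 0) 0 = 0 ∧
  ∀ t > (0:ℝ), deriv (deriv X) t + (3 / t) • deriv X t + gradient f (X t) = 0

/-- The speed restarting time of a trajectory `X`. -/
def SpeedRestartTime (n : ℕ) (X : ℝ → E n) : ℝ :=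
  sSup {t : ℝ | 0 < t ∧ ∀ u ∈ Set.Ioo (0:ℝ) t, 0 < deriv (fun v => ‖deriv X v‖ ^ 2) u}

local notation "⟪" x ", " y "⟫" => @inner ℝ _ _ x y

theorem ConvexOn.apply_add_le_of_hasFDerivAt {V : Type*} [NormedAddCommGroup V] [NormedSpace ℝ V]
    {g : V → ℝ} {g' : V →L[ℝ] ℝ} {x : V} (hg : ConvexOn ℝ univ g) (hx : HasFDerivAt g g' x)
    (y : V) : g x + g' (y - x) ≤ g y := by
  have hline : ConvexOn ℝ univ (g ∘ (AffineMap.lineMap x y : ℝ →ᵃ[ℝ] V)) := by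
    simpa using hg.comp_affineMap (AffineMap.lineMap x y : ℝ →ᵃ[ℝ] V)
  have hderiv : HasDerivAt (g ∘ (AffineMap.lineMap x y : ℝ →ᵃ[ℝ] V)) (g' (y - x)) 0 :=
    hx.comp_hasDerivAt_of_eq 0 (AffineMap.hasDerivAt_lineMap (a := x) (b := y)) (by simp)
  have := hline.le_slope_of_hasDerivAt (mem_univ 0) (mem_univ 1) one_pos hderiv
  simp only [slope_def_field, Function.comp_apply, AffineMap.lineMap_apply_one,
    AffineMap.lineMap_apply_zero, sub_zero, div_one] at this
  linarith

section Gradient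

open ContinuousLinearMap

variable {F : Type*} [NormedAddCommGroup F] [InnerProductSpace ℝ F]

variable [CompleteSpace F] {f : F → ℝ} {μ : ℝ}

theorem add_inner_gradient_add_sq_le (hconv : ConvexOn ℝ univ (fun x => f x - μ / 2 * ‖x‖ ^ 2))
    {x : F} (hx : DifferentiableAt ℝ f x) (y : F) :
    f x + ⟪gradient f x, y - x⟫ + μ / 2 * ‖y - x‖ ^ 2 ≤ f y := by
  have := hconv.apply_add_le_of_hasFDerivAt
    (hx.hasGradientAt.sub ((hasStrictFDerivAt_id x).hasFDerivAt.norm_sq.const_mul (μ / 2))) y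
  simp only [sub_apply, InnerProductSpace.toDual_apply_apply, smul_apply, comp_apply, id_apply,
    innerSL_apply_apply, inner_sub_right, id, real_inner_self_eq_norm_sq, smul_eq_mul,
    nsmul_eq_mul] at this
  rw [norm_sub_sq_real, inner_sub_right, real_inner_comm x y]
  linarith

theorem two_mul_mul_sub_le_norm_gradient_sq (hμ : 0 < μ)
    (hconv : ConvexOn ℝ univ (fun x => f x - μ / 2 * ‖x‖ ^ 2)) {x : F} (hx : DifferentiableAt ℝ f x)
    (y : F) : 2 * μ * (f x - f y) ≤ ‖gradient f x‖ ^ 2 := by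
  have h := add_inner_gradient_add_sq_le hconv hx y
  have hcs : -(‖gradient f x‖ * ‖y - x‖) ≤ ⟪gradient f x, y - x⟫ :=
    neg_le_of_abs_le (abs_real_inner_le_norm _ _)
  nlinarith [sq_nonneg (‖gradient f x‖ - μ * ‖y - x‖)]

theorem gradient_ne_zero_of_ne_of_isMinOn (hμ : 0 < μ)
    (hconv : ConvexOn ℝ univ (fun x => f x - μ / 2 * ‖x‖ ^ 2)) {x y : F}
    (hx : DifferentiableAt ℝ f x) (hmin : IsMinOn f univ y) (hne : x ≠ y) : gradient f x ≠ 0 := by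
  intro h0
  have h := add_inner_gradient_add_sq_le hconv hx y
  rw [h0, inner_zero_left] at h
  have hxy : 0 < ‖y - x‖ := norm_pos_iff.2 (sub_ne_zero.2 hne.symm)
  have hle : f y ≤ f x := hmin (mem_univ x)
  nlinarith [pow_pos hxy 2]

theorem ContDiff.continuous_gradient (hf : ContDiff ℝ 1 f) : Continuous (gradient f) :=
  (InnerProductSpace.toDual ℝ F).symm.continuous.comp (hf.continuous_fderiv one_ne_zero)

end Gradient

theorem intervalIntegral.norm_integral_le_pow_mul {F : Type*} [NormedAddCommGroup F]
    [NormedSpace ℝ F] {φ : ℝ → F} {t K : ℝ} (k : ℕ) (ht : 0 ≤ t)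
    (hφ : ∀ u ∈ Ioc 0 t, ‖φ u‖ ≤ u ^ k * K) :
    ‖∫ u in 0..t, φ u‖ ≤ t ^ (k + 1) / (k + 1) * K := by
  have hbound := intervalIntegral.norm_integral_le_of_norm_le (μ := MeasureTheory.volume) ht
    (MeasureTheory.ae_of_all _ hφ) (Continuous.intervalIntegrable (by fun_prop) 0 t)
  rwa [intervalIntegral.integral_mul_const, integral_pow, zero_pow (Nat.succ_ne_zero k), sub_zero]
    at hbound

theorem inner_add_sub_smul_le {F : Type*} [NormedAddCommGroup F] [InnerProductSpace ℝ F]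
    {a d e : F} {s : ℝ} (hs : 0 ≤ s) (hd : ‖d‖ ≤ ‖a‖ / 63) (he : ‖e‖ ≤ s * (‖a‖ / 63)) :
    ⟪a + d, e - s • a⟫ ≤ -(4 / 5) * s * ‖a‖ ^ 2 := by
  have hexp : ⟪a + d, e - s • a⟫ = ⟪a, e⟫ + ⟪d, e⟫ - s * ‖a‖ ^ 2 - s * ⟪d, a⟫ := by
    rw [inner_add_left, inner_sub_right, inner_sub_right, inner_smul_right, inner_smul_right,
      real_inner_self_eq_norm_sq]
    ring
  have hae := real_inner_le_norm a e
  have hde := real_inner_le_norm d e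
  have hda := neg_le_of_abs_le (abs_real_inner_le_norm d a)
  have ha := norm_nonneg a
  have hd' := norm_nonneg d
  have he' := norm_nonneg e
  rw [hexp]
  nlinarith [mul_le_mul hd he he' (by positivity), mul_le_mul_of_nonneg_left he ha,
    mul_le_mul_of_nonneg_right hd ha, mul_nonneg hs (sq_nonneg ‖a‖)]

theorem deriv_norm_deriv_sq_pos_of_mem_Ioo_speedRestartTime {n : ℕ} {X : ℝ → E n} {u : ℝ}
    (hu : u ∈ Ioo 0 (SpeedRestartTime n X)) : 0 < deriv (fun v => ‖deriv X v‖ ^ 2) u := by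
  rcases (Set.eq_empty_or_nonempty
    {t : ℝ | 0 < t ∧ ∀ u ∈ Ioo (0 : ℝ) t, 0 < deriv (fun v => ‖deriv X v‖ ^ 2) u}) with h | h
  · rw [SpeedRestartTime, h, Real.sSup_empty] at hu
    exact absurd hu.1 hu.2.not_gt
  · obtain ⟨t, ⟨-, ht⟩, hut⟩ := exists_lt_of_lt_csSup h hu.2
    exact ht u ⟨hu.1, hut⟩

namespace NesterovSol

variable {n : ℕ} {f : E n → ℝ} {x0 : E n} {X : ℝ → E n} {t : ℝ}

theorem continuousOn_Icc (hX : NesterovSol n f x0 X) : ContinuousOn X (Icc 0 t) :=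
  hX.2.1.continuousOn.mono Icc_subset_Ici_self

theorem hasDerivAt (hX : NesterovSol n f x0 X) (ht : 0 < t) : HasDerivAt X (deriv X t) t :=
  ((hX.2.2.1.differentiableOn two_ne_zero).differentiableAt (Ioi_mem_nhds ht)).hasDerivAt

theorem hasDerivAt_deriv (hX : NesterovSol n f x0 X) (ht : 0 < t) :
    HasDerivAt (deriv X) (-(3 / t) • deriv X t - gradient f (X t)) t := by
  have hd : DifferentiableAt ℝ (deriv X) t :=
    ((hX.2.2.1.deriv_of_isOpen (m := 1) isOpen_Ioi (by norm_num)).differentiableOn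
      one_ne_zero).differentiableAt (Ioi_mem_nhds ht)
  exact hd.hasDerivAt.congr_deriv (by linear_combination (norm := module) hX.2.2.2.2 t ht)

theorem continuousOn_derivWithin (hX : NesterovSol n f x0 X) :
    ContinuousOn (derivWithin X (Ici 0)) (Ici 0) :=
  hX.2.1.continuousOn_derivWithin (uniqueDiffOn_Ici 0) le_rfl

theorem hasDerivAt_norm_deriv_sq (hX : NesterovSol n f x0 X) (ht : 0 < t) :
    HasDerivAt (fun s => ‖deriv X s‖ ^ 2)
      (-(6 / t) * ‖deriv X t‖ ^ 2 - 2 * ⟪gradient f (X t), deriv X t⟫) t := by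
  refine (hX.hasDerivAt_deriv ht).norm_sq.congr_deriv ?_
  rw [inner_sub_right, inner_smul_right, real_inner_self_eq_norm_sq, real_inner_comm]
  ring

theorem hasDerivAt_comp (hX : NesterovSol n f x0 X) (hf : DifferentiableAt ℝ f (X t))
    (ht : 0 < t) :
    HasDerivAt (fun s => f (X s)) ⟪gradient f (X t), deriv X t⟫ t := by
  have hfX : HasFDerivAt f (InnerProductSpace.toDual ℝ (E n) (gradient f (X t))) (X t) :=
    hf.hasGradientAt
  have h := hfX.comp_hasDerivAt t (hX.hasDerivAt ht)
  rw [InnerProductSpace.toDual_apply_apply] at h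
  exact h

theorem hasDerivAt_energy (hX : NesterovSol n f x0 X) (hf : DifferentiableAt ℝ f (X t))
    (ht : 0 < t) :
    HasDerivAt (fun s => f (X s) + ‖deriv X s‖ ^ 2 / 2) (-(3 / t) * ‖deriv X t‖ ^ 2) t :=
  ((hX.hasDerivAt_comp hf ht).add ((hX.hasDerivAt_norm_deriv_sq ht).div_const 2)).congr_deriv
    (by ring)

theorem pow_three_smul_deriv_eq (hX : NesterovSol n f x0 X) (hg : Continuous (gradient f))
    (ht : 0 < t) : t ^ 3 • deriv X t = -∫ u in 0..t, u ^ 3 • gradient f (X u) := by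
  have hftc := intervalIntegral.integral_eq_sub_of_hasDeriv_right_of_le ht.le
    (f := fun u => u ^ 3 • derivWithin X (Ici 0) u) (f' := fun u => -(u ^ 3 • gradient f (X u)))
    ((continuous_pow 3).continuousOn.smul (hX.continuousOn_derivWithin.mono Icc_subset_Ici_self))
    (fun u hu => ?_)
    (ContinuousOn.intervalIntegrable_of_Icc ht.le
      ((continuous_pow 3).continuousOn.smul (hg.comp_continuousOn hX.continuousOn_Icc)).neg)
  · simpa [hX.2.2.2.1, derivWithin_of_mem_nhds (Ici_mem_nhds ht), intervalIntegral.integral_neg]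
      using hftc.symm
  · have hev : (fun v => v ^ 3 • deriv X v) =ᶠ[𝓝 u] fun v => v ^ 3 • derivWithin X (Ici 0) v := by
      filter_upwards [Ioi_mem_nhds hu.1] with v hv
      rw [derivWithin_of_mem_nhds (Ici_mem_nhds hv)]
    refine ((((hasDerivAt_pow 3 u).smul (hX.hasDerivAt_deriv hu.1)).congr_deriv
      ?_).congr_of_eventuallyEq hev.symm).hasDerivWithinAt
    rw [smul_sub, smul_smul, show u ^ 3 * -(3 / u) = -(3 * u ^ 2) by field_simp]
    simp only [Nat.cast_ofNat, Nat.add_one_sub_one, neg_smul]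
    abel

theorem norm_deriv_add_smul_le (hX : NesterovSol n f x0 X) (hg : Continuous (gradient f))
    (a : E n) {K : ℝ} (ht : 0 < t) (hK : ∀ u ∈ Ioc 0 t, ‖gradient f (X u) - a‖ ≤ K) :
    ‖deriv X t + (t / 4) • a‖ ≤ t / 4 * K := by
  have hint : IntervalIntegrable (fun u => u ^ 3 • gradient f (X u)) MeasureTheory.volume 0 t :=
    ContinuousOn.intervalIntegrable_of_Icc ht.le
      ((continuous_pow 3).continuousOn.smul (hg.comp_continuousOn hX.continuousOn_Icc))
  have hrep : t ^ 3 • (deriv X t + (t / 4) • a) =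
      -∫ u in 0..t, u ^ 3 • (gradient f (X u) - a) := by
    simp_rw [smul_sub]
    rw [intervalIntegral.integral_sub hint
        (Continuous.intervalIntegrable (by fun_prop : Continuous fun u : ℝ => u ^ 3 • a) 0 t),
      intervalIntegral.integral_smul_const, integral_pow, smul_add,
      hX.pow_three_smul_deriv_eq hg ht, smul_smul]
    module
  have hbound := intervalIntegral.norm_integral_le_pow_mul
      (φ := fun u => u ^ 3 • (gradient f (X u) - a)) 3 ht.le fun u hu => by
    rw [norm_smul, Real.norm_of_nonneg (pow_nonneg hu.1.le 3)]
    exact mul_le_mul_of_nonneg_left (hK u hu) (pow_nonneg hu.1.le 3)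
  rw [← norm_neg, ← hrep, norm_smul, Real.norm_of_nonneg (pow_nonneg ht.le 3)] at hbound
  refine le_of_mul_le_mul_left ?_ (pow_pos ht 3)
  linarith

theorem norm_sub_le_of_norm_deriv_le (hX : NesterovSol n f x0 X) {K : ℝ} (ht : 0 ≤ t)
    (hK : ∀ u ∈ Ioc 0 t, ‖deriv X u‖ ≤ u * K) : ‖X t - x0‖ ≤ t ^ 2 / 2 * K := by
  have hftc : ∫ u in 0..t, derivWithin X (Ici 0) u = X t - x0 := by
    rw [← hX.1]
    exact intervalIntegral.integral_eq_sub_of_hasDeriv_right_of_le ht hX.continuousOn_Icc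
      (fun u hu => ((hX.hasDerivAt hu.1).congr_deriv
        (derivWithin_of_mem_nhds (Ici_mem_nhds hu.1)).symm).hasDerivWithinAt)
      ((hX.continuousOn_derivWithin.mono Icc_subset_Ici_self).intervalIntegrable_of_Icc ht)
  have hbound := intervalIntegral.norm_integral_le_pow_mul (φ := derivWithin X (Ici 0)) 1 ht
      fun u hu => by
    rw [derivWithin_of_mem_nhds (Ici_mem_nhds hu.1), pow_one]
    exact hK u hu
  rw [hftc] at hbound
  convert hbound using 2
  norm_num

variable {L : ℝ}

theorem norm_sub_le_of_mul_sq_le_one (hX : NesterovSol n f x0 X) (hg : Continuous (gradient f))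
    (hLip : ∀ x y, ‖gradient f x - gradient f y‖ ≤ L * ‖x - y‖) (hL : 0 ≤ L) (ht : 0 ≤ t)
    (hκ : L * t ^ 2 ≤ 1) {u : ℝ} (hu : u ∈ Icc 0 t) :
    ‖X u - x0‖ ≤ t ^ 2 * ‖gradient f x0‖ / 7 := by
  obtain ⟨s, hs, hmax⟩ := isCompact_Icc.exists_isMaxOn (nonempty_Icc.2 ht)
    (hX.continuousOn_Icc.sub continuousOn_const).norm
  set M := ‖X s - x0‖
  set G := ‖gradient f x0‖
  have hgrad : ∀ v ∈ Ioc 0 t, ‖gradient f (X v) - 0‖ ≤ G + L * M := fun v hv => by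
    rw [sub_zero]
    calc ‖gradient f (X v)‖ ≤ G + ‖gradient f (X v) - gradient f x0‖ := norm_le_insert' _ _
      _ ≤ G + L * M := by
        gcongr
        exact (hLip _ _).trans (mul_le_mul_of_nonneg_left (hmax (Ioc_subset_Icc_self hv)) hL)
  have hvel : ∀ v ∈ Ioc 0 s, ‖deriv X v‖ ≤ v * ((G + L * M) / 4) := fun v hv => by
    have := hX.norm_deriv_add_smul_le hg 0 hv.1 fun w hw =>
      hgrad w ⟨hw.1, hw.2.trans (hv.2.trans hs.2)⟩
    rw [smul_zero, add_zero] at this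
    linarith
  have hM : M ≤ t ^ 2 / 8 * (G + L * M) := by
    have hst : s ^ 2 ≤ t ^ 2 := pow_le_pow_left₀ hs.1 hs.2 2
    nlinarith [hX.norm_sub_le_of_norm_deriv_le hs.1 hvel, mul_nonneg hL (norm_nonneg (X s - x0)),
      norm_nonneg (gradient f x0)]
  have hM' : M ≤ t ^ 2 * G / 7 := by
    nlinarith [mul_le_mul_of_nonneg_right hκ (norm_nonneg (X s - x0))]
  exact (hmax hu).trans hM'

theorem norm_gradient_sub_le (hX : NesterovSol n f x0 X) (hg : Continuous (gradient f))
    (hLip : ∀ x y, ‖gradient f x - gradient f y‖ ≤ L * ‖x - y‖) (hL : 0 ≤ L) (ht : 0 ≤ t)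
    (hκ : L * t ^ 2 ≤ 1 / 9) {u : ℝ} (hu : u ∈ Icc 0 t) :
    ‖gradient f (X u) - gradient f x0‖ ≤ ‖gradient f x0‖ / 63 :=
  calc ‖gradient f (X u) - gradient f x0‖ ≤ L * ‖X u - x0‖ := hLip _ _
    _ ≤ L * (t ^ 2 * ‖gradient f x0‖ / 7) := mul_le_mul_of_nonneg_left
        (hX.norm_sub_le_of_mul_sq_le_one hg hLip hL ht (by linarith) hu) hL
    _ ≤ ‖gradient f x0‖ / 63 := by nlinarith [norm_nonneg (gradient f x0)]

theorem norm_deriv_add_le (hX : NesterovSol n f x0 X) (hg : Continuous (gradient f))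
    (hLip : ∀ x y, ‖gradient f x - gradient f y‖ ≤ L * ‖x - y‖) (hL : 0 ≤ L) (ht : 0 < t)
    (hκ : L * t ^ 2 ≤ 1 / 9) :
    ‖deriv X t + (t / 4) • gradient f x0‖ ≤ t / 4 * (‖gradient f x0‖ / 63) :=
  hX.norm_deriv_add_smul_le hg _ ht fun _ hu =>
    hX.norm_gradient_sub_le hg hLip hL ht.le hκ (Ioc_subset_Icc_self hu)

theorem inner_gradient_deriv_le (hX : NesterovSol n f x0 X) (hg : Continuous (gradient f))
    (hLip : ∀ x y, ‖gradient f x - gradient f y‖ ≤ L * ‖x - y‖) (hL : 0 ≤ L) (ht : 0 < t)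
    (hκ : L * t ^ 2 ≤ 1 / 9) :
    ⟪gradient f (X t), deriv X t⟫ ≤ -(t / 5) * ‖gradient f x0‖ ^ 2 := by
  have h := inner_add_sub_smul_le (by positivity)
    (hX.norm_gradient_sub_le hg hLip hL ht.le hκ ⟨ht.le, le_rfl⟩)
    (hX.norm_deriv_add_le hg hLip hL ht hκ)
  rw [add_sub_cancel, add_sub_cancel_right] at h
  linarith

theorem deriv_norm_deriv_sq_pos (hX : NesterovSol n f x0 X) (hg : Continuous (gradient f))
    (hLip : ∀ x y, ‖gradient f x - gradient f y‖ ≤ L * ‖x - y‖) (hL : 0 ≤ L)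
    (h0 : gradient f x0 ≠ 0) (ht : 0 < t) (hκ : L * t ^ 2 ≤ 1 / 9) :
    0 < deriv (fun s => ‖deriv X s‖ ^ 2) t := by
  rw [(hX.hasDerivAt_norm_deriv_sq ht).deriv]
  set G := ‖gradient f x0‖
  have hG : 0 < G := norm_pos_iff.2 h0
  have hv : ‖deriv X t‖ ≤ t / 4 * (64 / 63) * G := by
    have := norm_le_insert' (deriv X t) (-((t / 4) • gradient f x0))
    rw [norm_neg, norm_smul, Real.norm_of_nonneg (by positivity), sub_neg_eq_add] at this
    linarith [hX.norm_deriv_add_le hg hLip hL ht hκ]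
  -- `(3/8)(64/63)² < 2/5`, while `-2⟪∇f(X t), Ẋ t⟫ ≥ (2/5) t G²`.
  have hsq : 6 / t * ‖deriv X t‖ ^ 2 ≤ 3 / 8 * (64 / 63) ^ 2 * t * G ^ 2 := by
    calc 6 / t * ‖deriv X t‖ ^ 2 ≤ 6 / t * (t / 4 * (64 / 63) * G) ^ 2 := by gcongr
      _ = 3 / 8 * (64 / 63) ^ 2 * t * G ^ 2 := by field_simp; ring
  nlinarith [hX.inner_gradient_deriv_le hg hLip hL ht hκ, mul_pos ht (pow_pos hG 2)]

theorem apply_sub_le_of_mul_sq_le (hX : NesterovSol n f x0 X) (hf : Differentiable ℝ f)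
    (hg : Continuous (gradient f)) (hLip : ∀ x y, ‖gradient f x - gradient f y‖ ≤ L * ‖x - y‖)
    (hL : 0 ≤ L) (ht : 0 ≤ t) (hκ : L * t ^ 2 ≤ 1 / 9) :
    f (X t) - f x0 ≤ -(t ^ 2 / 10) * ‖gradient f x0‖ ^ 2 := by
  set G := ‖gradient f x0‖
  have hanti : AntitoneOn (fun s => f (X s) + s ^ 2 / 10 * G ^ 2) (Icc 0 t) := by
    refine antitoneOn_of_hasDerivWithinAt_nonpos (convex_Icc 0 t)
      (f' := fun s => ⟪gradient f (X s), deriv X s⟫ + s / 5 * G ^ 2)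
      ((hf.continuous.comp_continuousOn hX.continuousOn_Icc).add (by fun_prop)) (fun s hs => ?_)
      (fun s hs => ?_) <;> rw [interior_Icc] at hs
    · refine ((hX.hasDerivAt_comp (hf _) hs.1).add ?_).hasDerivWithinAt
      exact ((hasDerivAt_pow 2 s).div_const 10).mul_const (G ^ 2) |>.congr_deriv (by ring)
    · have hκs : L * s ^ 2 ≤ 1 / 9 :=
        (mul_le_mul_of_nonneg_left (pow_le_pow_left₀ hs.1.le hs.2.le 2) hL).trans hκ
      linarith [hX.inner_gradient_deriv_le hg hLip hL hs.1 hκs]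
  have h := hanti ⟨le_rfl, ht⟩ ⟨ht, le_rfl⟩ ht
  simp only [hX.1] at h
  linarith

theorem not_forall_deriv_norm_deriv_sq_pos (hX : NesterovSol n f x0 X) (hf : Differentiable ℝ f)
    (hbdd : BddBelow (range f)) : ¬∀ u > 0, 0 < deriv (fun s => ‖deriv X s‖ ^ 2) u := by
  intro hpos
  obtain ⟨m, hm⟩ := hbdd
  set g := fun s => ‖deriv X s‖ ^ 2
  have hmono : StrictMonoOn g (Ioi 0) := strictMonoOn_of_deriv_pos (convex_Ioi 0)
    (fun s hs => (hX.hasDerivAt_norm_deriv_sq hs).continuousAt.continuousWithinAt)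
    (by simpa using hpos)
  set c := g 1
  have hc : 0 < c := (sq_nonneg _).trans_lt (hmono (by norm_num) (mem_Ioi.2 one_pos)
    (by norm_num : (1 : ℝ) / 2 < 1))
  -- Past `t = 1` the energy dissipates at rate at least `3c/t`, so it would fall below `inf f`.
  set V := fun s => f (X s) + g s / 2 + 3 * c * Real.log s
  have hV : ∀ s > 0, HasDerivAt V (-(3 / s) * g s + 3 * c * s⁻¹) s := fun s hs =>
    ((hX.hasDerivAt_energy (hf _) hs).add ((Real.hasDerivAt_log hs.ne').const_mul _)).congr_deriv
      (by ring)
  have hanti : AntitoneOn V (Ici 1) := by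
    refine antitoneOn_of_hasDerivWithinAt_nonpos (convex_Ici 1)
      (fun s hs => (hV s (one_pos.trans_le hs)).continuousAt.continuousWithinAt)
      (fun s hs => (hV s (one_pos.trans_le (interior_subset hs))).hasDerivWithinAt)
      fun s hs => ?_
    rw [interior_Ici] at hs
    have hs0 : 0 < s := one_pos.trans hs
    have hcs : c ≤ g s := (hmono (mem_Ioi.2 one_pos) hs0 hs).le
    have : -(3 / s) * g s + 3 * c * s⁻¹ = 3 / s * (c - g s) := by ring
    rw [this]
    exact mul_nonpos_of_nonneg_of_nonpos (by positivity) (by linarith)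
  obtain ⟨s, hlog, hs⟩ := ((Real.tendsto_log_atTop.eventually_gt_atTop ((V 1 - m) / (3 * c))).and
    (eventually_ge_atTop 1)).exists
  have hVs : V s ≤ V 1 := hanti (mem_Ici.2 le_rfl) hs hs
  have hlog' : V 1 - m < 3 * c * Real.log s := (div_lt_iff₀' (by positivity)).1 hlog
  have hms : m ≤ f (X s) := hm (mem_range_self _)
  have hgs : 0 ≤ g s := sq_nonneg _
  simp only [V, Real.log_one, mul_zero, add_zero] at hVs hlog'
  linarith

theorem bddAbove_setOf_deriv_norm_deriv_sq_pos (hX : NesterovSol n f x0 X) (hf : Differentiable ℝ f)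
    (hbdd : BddBelow (range f)) :
    BddAbove {t : ℝ | 0 < t ∧ ∀ u ∈ Ioo (0 : ℝ) t, 0 < deriv (fun v => ‖deriv X v‖ ^ 2) u} := by
  by_contra h
  refine hX.not_forall_deriv_norm_deriv_sq_pos hf hbdd fun u hu => ?_
  obtain ⟨t, ⟨-, ht⟩, hut⟩ := not_bddAbove_iff.1 h u
  exact ht u ⟨hu, hut⟩

theorem antitoneOn_comp_Icc_speedRestartTime (hX : NesterovSol n f x0 X)
    (hf : Differentiable ℝ f) : AntitoneOn (fun s => f (X s)) (Icc 0 (SpeedRestartTime n X)) := by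
  refine antitoneOn_of_hasDerivWithinAt_nonpos (convex_Icc _ _)
    (f' := fun s => ⟪gradient f (X s), deriv X s⟫)
    (hf.continuous.comp_continuousOn hX.continuousOn_Icc) (fun s hs => ?_) (fun s hs => ?_)
    <;> rw [interior_Icc] at hs
  · exact (hX.hasDerivAt_comp (hf _) hs.1).hasDerivWithinAt
  · have h := deriv_norm_deriv_sq_pos_of_mem_Ioo_speedRestartTime hs
    rw [(hX.hasDerivAt_norm_deriv_sq hs.1).deriv] at h
    have : 0 ≤ 6 / s * ‖deriv X s‖ ^ 2 := by have := hs.1; positivity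
    linarith

end NesterovSol

/-- **Lemma (constant decay per restart).** There is a universal constant `C > 0` such that
for every `f ∈ S_{μ,L}` and `x₀ ≠ x⋆`, the Nesterov ODE solution satisfies
`f(X(T)) - f⋆ ≤ (1 - Cμ/L)(f(x₀) - f⋆)` at the speed restarting time `T`. -/
theorem speed_restart_decay :
    ∃ C > (0:ℝ), ∀ (n : ℕ) (μ L : ℝ), 0 < μ → μ ≤ L →
      ∀ f : E n → ℝ, MemS n μ L f →
      ∀ xstar : E n, IsMinOn f Set.univ xstar →
      ∀ x0 : E n, x0 ≠ xstar →
      ∀ X : ℝ → E n, NesterovSol n f x0 X →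
        f (X (SpeedRestartTime n X)) - f xstar ≤
          (1 - C * μ / L) * (f x0 - f xstar) := by
  refine ⟨1 / 45, by norm_num, ?_⟩
  rintro n μ L hμ hμL f ⟨⟨-, hf, hLip⟩, hconv⟩ xstar hmin x0 hne X hX
  have hL : 0 < L := hμ.trans_le hμL
  have hdiff : Differentiable ℝ f := hf.differentiable one_ne_zero
  have hg := hf.continuous_gradient
  set t₀ := 1 / (3 * √L)
  have ht₀ : 0 < t₀ := by positivity
  have hκ : L * t₀ ^ 2 = 1 / 9 := by
    rw [div_pow, mul_pow, Real.sq_sqrt hL.le]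
    field_simp
    norm_num
  have hT : t₀ ≤ SpeedRestartTime n X :=
    le_csSup (hX.bddAbove_setOf_deriv_norm_deriv_sq_pos hdiff (by simpa using hmin.bddBelow))
      ⟨ht₀, fun u hu => hX.deriv_norm_deriv_sq_pos hg hLip hL.le
        (gradient_ne_zero_of_ne_of_isMinOn hμ hconv (hdiff x0) hmin hne) hu.1
        ((mul_le_mul_of_nonneg_left (pow_le_pow_left₀ hu.1.le hu.2.le 2) hL.le).trans hκ.le)⟩
  have hmono := hX.antitoneOn_comp_Icc_speedRestartTime hdiff ⟨ht₀.le, hT⟩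
    ⟨ht₀.le.trans hT, le_rfl⟩ hT
  have hdecrease := hX.apply_sub_le_of_mul_sq_le hdiff hg hLip hL.le ht₀.le hκ.le
  have hPL := two_mul_mul_sub_le_norm_gradient_sq hμ hconv (hdiff x0) xstar
  have hgap : 0 ≤ f x0 - f xstar := sub_nonneg.2 (hmin (mem_univ x0))
  have ht₀sq : t₀ ^ 2 = 1 / (9 * L) := by field_simp; linarith
  calc f (X (SpeedRestartTime n X)) - f xstar
      ≤ f x0 - f xstar - t₀ ^ 2 / 10 * (2 * μ * (f x0 - f xstar)) := by
        nlinarith [mul_le_mul_of_nonneg_left hPL (by positivity : 0 ≤ t₀ ^ 2 / 10)]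
    _ = (1 - 1 / 45 * μ / L) * (f x0 - f xstar) := by rw [ht₀sq]; field_simp; ring
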